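/- arXiv:1909.05900 — 4 statements merged into one kernel-verified Lean document; each statement's English description precedes it below -/
import Mathlib

section
/- Let r : ℝ → (0,∞) be a 2π-periodic C¹ function giving a convex body K in polar coordinates whose centroid is at the origin. Then the derivative r' has at least four zeros in [0, 2π). -/
/-!
Put `u = (r³)' = 3 r² r'`. It is `2π`-periodic with `∫ u = 0`, and integrating by parts the
centroid conditions `∫ r³ cos = ∫ r³ sin = 0` gives `∫ u cos = ∫ u sin = 0`. Suppose `u` has a
positive value; it also has a negative one, so some arc `(p, q)` between two zeros carries `u > 0`.
If the rest `(q, p + 2π)` of the period contained at most one zero `w` of `u`, then `u` would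
change sign at most twice on the circle, and with suitable `a < b` the function
`T t = sin ((t - a) / 2) * sin ((t - b) / 2)`, a combination of `1, cos, sin`, would have the
sign opposite to `u` everywhere: `∫ u T = 0` then forces `u = 0` on `(a, b)`, a contradiction.
Hence `u`, and so `r'`, has the four zeros `p, q, w₁, w₂` in a period.
-/

open Real Set Function

theorem IsPreconnected.pos_or_neg_of_ne_zero {X : Type*} [TopologicalSpace X] {s : Set X}
    {f : X → ℝ} (hs : IsPreconnected s) (hf : ContinuousOn f s) (h : ∀ t ∈ s, f t ≠ 0) :
    (∀ t ∈ s, 0 < f t) ∨ ∀ t ∈ s, f t < 0 := by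
  by_contra! hsign
  obtain ⟨⟨a, ha, hfa⟩, b, hb, hfb⟩ := hsign
  obtain ⟨c, hc, hfc⟩ := hs.intermediate_value ha hb hf ⟨hfa, hfb⟩
  exact h c hc hfc

theorem Continuous.mapsTo_Icc_of_mapsTo_Ioo {f : ℝ → ℝ} (hf : Continuous f) {a b : ℝ}
    (hab : a < b) {s : Set ℝ} (hs : IsClosed s) (h : MapsTo f (Ioo a b) s) :
    MapsTo f (Icc a b) s :=
  closure_Ioo hab.ne ▸ h.closure_left hf hs

theorem Set.MapsTo.Icc_union {f : ℝ → ℝ} {a b c : ℝ} {s : Set ℝ} (hab : a ≤ b) (hbc : b ≤ c)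
    (h₁ : MapsTo f (Icc a b) s) (h₂ : MapsTo f (Icc b c) s) : MapsTo f (Icc a c) s :=
  Icc_union_Icc_eq_Icc hab hbc ▸ h₁.union h₂

theorem ContinuousOn.exists_first_zero {f : ℝ → ℝ} {x y : ℝ} (hf : ContinuousOn f (Icc x y))
    (hxy : x ≤ y) (hx : 0 < f x) (hy : f y ≤ 0) :
    ∃ q ∈ Ioc x y, f q = 0 ∧ ∀ t ∈ Ico x q, 0 < f t := by
  set S := Icc x y ∩ f ⁻¹' Iic 0
  have hS : IsClosed S := hf.preimage_isClosed_of_isClosed isClosed_Icc isClosed_Iic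
  have hyS : y ∈ S := ⟨⟨hxy, le_rfl⟩, hy⟩
  have hbdd : BddBelow S := bddBelow_Icc.mono inter_subset_left
  obtain ⟨⟨hxq, hqy⟩, hfq⟩ : sInf S ∈ S := hS.csInf_mem ⟨y, hyS⟩ hbdd
  have hpos : ∀ t ∈ Ico x (sInf S), 0 < f t := fun t ht => by
    by_contra! hft
    exact (csInf_le hbdd ⟨⟨ht.1, ht.2.le.trans hqy⟩, hft⟩).not_gt ht.2
  obtain ⟨z, hz, hfz⟩ := intermediate_value_Icc' hxq (hf.mono (Icc_subset_Icc_right hqy))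
    ⟨hfq, hx.le⟩
  have hzq : z = sInf S :=
    le_antisymm hz.2 (csInf_le hbdd ⟨⟨hz.1, hz.2.trans hqy⟩, hfz.le⟩)
  exact ⟨sInf S, ⟨lt_of_le_of_ne hxq fun h => hx.not_ge (by rwa [h]), hqy⟩, hzq ▸ hfz, hpos⟩

theorem ContinuousOn.exists_last_zero {f : ℝ → ℝ} {x y : ℝ} (hf : ContinuousOn f (Icc y x))
    (hyx : y ≤ x) (hx : 0 < f x) (hy : f y ≤ 0) :
    ∃ p ∈ Ico y x, f p = 0 ∧ ∀ t ∈ Ioc p x, 0 < f t := by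
  have hg : ContinuousOn (fun t => f (-t)) (Icc (-x) (-y)) :=
    hf.comp continuousOn_neg fun t ht => ⟨le_neg.1 ht.2, neg_le.1 ht.1⟩
  obtain ⟨q, hq, hfq, hpos⟩ :=
    hg.exists_first_zero (neg_le_neg hyx) (by simpa using hx) (by simpa using hy)
  refine ⟨-q, ⟨le_neg.1 hq.2, neg_lt.1 hq.1⟩, hfq, fun t ht => ?_⟩
  simpa using hpos (-t) ⟨neg_le_neg ht.2, neg_lt.2 ht.1⟩

theorem Function.Periodic.map_toIcoMod {α : Type*} {f : ℝ → α} {c : ℝ} (hf : Periodic f c)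
    (hc : 0 < c) (a x : ℝ) : f (toIcoMod hc a x) = f x :=
  hf.sub_zsmul_eq _

theorem Function.Periodic.exists_zero_arc {u : ℝ → ℝ} {c : ℝ} (hper : Periodic u c) (hc : 0 < c)
    (hu : Continuous u) {x y : ℝ} (hx : 0 < u x) (hy : u y < 0) :
    ∃ p q, p < x ∧ x < q ∧ q < p + c ∧ u p = 0 ∧ u q = 0 ∧ ∀ t ∈ Ioo p q, 0 < u t := by
  set y₁ := toIcoMod hc x y
  obtain ⟨hxy₁, hy₁x⟩ : y₁ ∈ Ico x (x + c) := toIcoMod_mem_Ico hc x y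
  have hy₁ : u y₁ < 0 := by rwa [hper.map_toIcoMod]
  obtain ⟨q, ⟨hxq, hqy₁⟩, hq0, hposR⟩ :=
    hu.continuousOn.exists_first_zero hxy₁ hx hy₁.le
  obtain ⟨p, ⟨hy₁p, hpx⟩, hp0, hposL⟩ :=
    hu.continuousOn.exists_last_zero (y := y₁ - c) (by linarith) hx
      (by rw [hper.sub_eq]; exact hy₁.le)
  refine ⟨p, q, hpx, hxq, ?_, hp0, hq0, fun t ht => ?_⟩
  · have : q ≠ y₁ := by rintro rfl; exact hy₁.ne hq0
    linarith [lt_of_le_of_ne hqy₁ this]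
  · rcases le_total t x with htx | hxt
    · exact hposL t ⟨ht.1, htx⟩
    · exact hposR t ⟨hxt, ht.2⟩

theorem Function.Periodic.exists_finset_zeros_Ico {M : Type*} [Zero M] {f : ℝ → M} {c : ℝ}
    (hf : Periodic f c) (hc : 0 < c) (a b : ℝ) {B : Finset ℝ}
    (hB : ∀ t ∈ B, t ∈ Ico a (a + c) ∧ f t = 0) :
    ∃ A : Finset ℝ, A.card = B.card ∧ ∀ t ∈ A, t ∈ Ico b (b + c) ∧ f t = 0 := by
  refine ⟨B.image (toIcoMod hc b), Finset.card_image_of_injOn fun s hs t ht hst => ?_, ?_⟩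
  · rw [← (toIcoMod_eq_self hc).2 (hB s hs).1, ← (toIcoMod_eq_self hc).2 (hB t ht).1]
    exact ((toIcoMod_inj hc).1 hst).toIcoMod_eq_toIcoMod hc
  · simp only [Finset.mem_image]
    rintro _ ⟨t, ht, rfl⟩
    exact ⟨toIcoMod_mem_Ico hc b t, hf.map_toIcoMod hc b t ▸ (hB t ht).2⟩

theorem sin_half_sub_mul_sin_half_sub (p q t : ℝ) :
    sin ((t - p) / 2) * sin ((t - q) / 2) =
      cos ((q - p) / 2) / 2 + -(cos ((p + q) / 2) / 2) * cos t
        + -(sin ((p + q) / 2) / 2) * sin t := by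
  have h := cos_sub_cos ((q - p) / 2) (t - (p + q) / 2)
  rw [show ((q - p) / 2 + (t - (p + q) / 2)) / 2 = (t - p) / 2 by ring,
    show ((q - p) / 2 - (t - (p + q) / 2)) / 2 = -((t - q) / 2) by ring, sin_neg,
    cos_sub t] at h
  linear_combination -h / 2

structure LowHarmonicsVanish (u : ℝ → ℝ) : Prop where
  continuous : Continuous u
  periodic : Periodic u (2 * π)
  integral_eq_zero : ∫ t in (0 : ℝ)..2 * π, u t = 0
  integral_mul_cos_eq_zero : ∫ t in (0 : ℝ)..2 * π, u t * cos t = 0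
  integral_mul_sin_eq_zero : ∫ t in (0 : ℝ)..2 * π, u t * sin t = 0

namespace LowHarmonicsVanish

variable {u : ℝ → ℝ}

theorem neg (hu : LowHarmonicsVanish u) : LowHarmonicsVanish (-u) where
  continuous := hu.continuous.neg
  periodic := fun t => by simp [hu.periodic t]
  integral_eq_zero := by simp [hu.integral_eq_zero]
  integral_mul_cos_eq_zero := by simp [hu.integral_mul_cos_eq_zero]
  integral_mul_sin_eq_zero := by simp [hu.integral_mul_sin_eq_zero]

theorem integral_mul_trig_eq_zero (hu : LowHarmonicsVanish u) (a b₀ b₁ b₂ : ℝ) :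
    ∫ t in a..a + 2 * π, u t * (b₀ + b₁ * cos t + b₂ * sin t) = 0 := by
  have := hu.continuous
  have hper : Periodic (fun t => u t * (b₀ + b₁ * cos t + b₂ * sin t)) (2 * π) := fun t => by
    simp only [hu.periodic t, cos_periodic t, sin_periodic t]
  rw [hper.intervalIntegral_add_eq a 0, zero_add]
  have hexpand : ∀ t, u t * (b₀ + b₁ * cos t + b₂ * sin t)
      = b₀ * u t + b₁ * (u t * cos t) + b₂ * (u t * sin t) := fun t => by ring
  simp_rw [hexpand]
  rw [intervalIntegral.integral_add, intervalIntegral.integral_add,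
    intervalIntegral.integral_const_mul, intervalIntegral.integral_const_mul,
    intervalIntegral.integral_const_mul, hu.integral_eq_zero, hu.integral_mul_cos_eq_zero,
    hu.integral_mul_sin_eq_zero]
  · ring
  all_goals exact (by fun_prop : Continuous _).intervalIntegrable _ _

theorem exists_neg_of_pos (hu : LowHarmonicsVanish u) {x : ℝ} (hx : 0 < u x) : ∃ y, u y < 0 := by
  by_contra! hnonneg
  refine (intervalIntegral.integral_pos two_pi_pos hu.continuous.continuousOn
    (fun t _ => hnonneg t) ⟨toIcoMod two_pi_pos 0 x, ?_, ?_⟩).ne' hu.integral_eq_zero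
  · simpa using Ico_subset_Icc_self (toIcoMod_mem_Ico two_pi_pos 0 x)
  · rwa [hu.periodic.map_toIcoMod]

/-- The test function `sin ((t - p) / 2) * sin ((t - q) / 2)` has the sign pattern `-, +` on
`[p, q], [q, p + 2π]`, opposite to that of `u`. -/
theorem eq_zero_of_nonneg_of_nonpos (hu : LowHarmonicsVanish u) {p q x : ℝ}
    (hq : q ≤ p + 2 * π) (hx : x ∈ Ioo p q) (hnn : MapsTo u (Icc p q) (Ici 0))
    (hnp : MapsTo u (Icc q (p + 2 * π)) (Iic 0)) : u x = 0 := by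
  set T := fun t => sin ((t - p) / 2) * sin ((t - q) / 2)
  have hT_nonpos : ∀ t ∈ Icc p q, T t ≤ 0 := fun t ht =>
    mul_nonpos_of_nonneg_of_nonpos (sin_nonneg_of_nonneg_of_le_pi (by linarith [ht.1])
      (by linarith [ht.2])) (sin_nonpos_of_nonpos_of_neg_pi_le (by linarith [ht.2])
      (by linarith [ht.1]))
  have hT_nonneg : ∀ t ∈ Icc q (p + 2 * π), 0 ≤ T t := fun t ht =>
    mul_nonneg (sin_nonneg_of_nonneg_of_le_pi (by linarith [ht.1, hx.1, hx.2])
      (by linarith [ht.2])) (sin_nonneg_of_nonneg_of_le_pi (by linarith [ht.1])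
      (by linarith [ht.2, hx.1, hx.2]))
  have hTx : T x < 0 :=
    mul_neg_of_pos_of_neg (sin_pos_of_pos_of_lt_pi (by linarith [hx.1]) (by linarith [hx.2]))
      (sin_neg_of_neg_of_neg_pi_lt (by linarith [hx.2]) (by linarith [hx.1]))
  have hint : ∫ t in p..p + 2 * π, -(u t * T t) = 0 := by
    simp only [T, sin_half_sub_mul_sin_half_sub, intervalIntegral.integral_neg,
      hu.integral_mul_trig_eq_zero, neg_zero]
  by_contra hux_ne
  have hux : 0 < u x := lt_of_le_of_ne (hnn ⟨hx.1.le, hx.2.le⟩) (Ne.symm hux_ne)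
  refine (intervalIntegral.integral_pos (f := fun t => -(u t * T t)) (by linarith [pi_pos])
    (hu.continuous.mul (by fun_prop)).neg.continuousOn (fun t ht => ?_)
    ⟨x, ⟨hx.1.le, by linarith [hx.2]⟩, neg_pos.2 (mul_neg_of_pos_of_neg hux hTx)⟩).ne' hint
  rcases le_total t q with htq | hqt
  · exact neg_nonneg.2 (mul_nonpos_of_nonneg_of_nonpos (hnn ⟨ht.1.le, htq⟩)
      (hT_nonpos t ⟨ht.1.le, htq⟩))
  · exact neg_nonneg.2 (mul_nonpos_of_nonpos_of_nonneg (hnp ⟨hqt, ht.2⟩)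
      (hT_nonneg t ⟨hqt, ht.2⟩))

theorem exists_zero_ne_of_pos_on (hu : LowHarmonicsVanish u) {p q w : ℝ} (hpq : p < q)
    (hp0 : u p = 0) (hpos : ∀ t ∈ Ioo p q, 0 < u t) (hw : w ∈ Ioo q (p + 2 * π)) :
    ∃ t ∈ Ioo q (p + 2 * π), t ≠ w ∧ u t = 0 := by
  obtain ⟨hqw, hwP⟩ := hw
  by_contra! hwz
  have hc := hu.continuous
  have hclose : ∀ {a b : ℝ} {s : Set ℝ}, a < b → IsClosed s → (∀ t ∈ Ioo a b, u t ∈ s) →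
      MapsTo u (Icc a b) s := fun hab hs h => hc.mapsTo_Icc_of_mapsTo_Ioo hab hs h
  have hA : MapsTo u (Icc p q) (Ici 0) := hclose hpq isClosed_Ici fun t ht => (hpos t ht).le
  have hmid := hpos ((p + q) / 2) ⟨by linarith, by linarith⟩
  rcases isPreconnected_Ioo.pos_or_neg_of_ne_zero (s := Ioo q w) hc.continuousOn
      (fun t ht => hwz t ⟨ht.1, ht.2.trans hwP⟩ ht.2.ne) with h₁ | h₁ <;>
    rcases isPreconnected_Ioo.pos_or_neg_of_ne_zero (s := Ioo w (p + 2 * π)) hc.continuousOn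
      (fun t ht => hwz t ⟨hqw.trans ht.1, ht.2⟩ ht.1.ne') with h₂ | h₂
  · have hP : MapsTo u (Icc (p + 2 * π) (p + 2 * π)) (Iic 0) := by
      rw [Icc_self]
      rintro _ rfl
      exact ((hu.periodic p).trans hp0).le
    refine hmid.ne' (hu.eq_zero_of_nonneg_of_nonpos le_rfl ⟨by linarith, by linarith⟩ ?_ hP)
    exact (hA.Icc_union hpq.le hqw.le (hclose hqw isClosed_Ici fun t ht => (h₁ t ht).le)
      ).Icc_union (by linarith) hwP.le (hclose hwP isClosed_Ici fun t ht => (h₂ t ht).le)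
  · exact hmid.ne' (hu.eq_zero_of_nonneg_of_nonpos hwP.le ⟨by linarith, by linarith⟩
      (hA.Icc_union hpq.le hqw.le (hclose hqw isClosed_Ici fun t ht => (h₁ t ht).le))
      (hclose hwP isClosed_Iic fun t ht => (h₂ t ht).le))
  · -- the sign pattern `-, +` of `u` is the pattern `+, -` of `-u` seen from `q`
    have hA' : MapsTo u (Icc (p + 2 * π) (q + 2 * π)) (Ici 0) := fun t ht => by
      rw [← hu.periodic.sub_eq t]
      exact hA ⟨by linarith [ht.1], by linarith [ht.2]⟩
    have hB : MapsTo u (Icc w (q + 2 * π)) (Ici 0) :=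
      (hclose hwP isClosed_Ici fun t ht => (h₂ t ht).le).Icc_union hwP.le (by linarith) hA'
    have hneg := hu.neg.eq_zero_of_nonneg_of_nonpos (x := (q + w) / 2) (by linarith)
      ⟨by linarith, by linarith⟩
      (fun t ht => show 0 ≤ -u t from
        neg_nonneg.2 (hclose hqw isClosed_Iic (fun t ht => (h₁ t ht).le) ht))
      (fun t ht => show -u t ≤ 0 from neg_nonpos.2 (hB ht))
    exact (h₁ _ ⟨by linarith, by linarith⟩).ne (neg_eq_zero.1 hneg)
  · exact hmid.ne' (hu.eq_zero_of_nonneg_of_nonpos (hqw.trans hwP).le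
      ⟨by linarith, by linarith⟩ hA
      ((hclose hqw isClosed_Iic fun t ht => (h₁ t ht).le).Icc_union hqw.le hwP.le
        (hclose hwP isClosed_Iic fun t ht => (h₂ t ht).le)))

theorem exists_four_zeros (hu : LowHarmonicsVanish u) :
    ∃ A : Finset ℝ, 4 ≤ A.card ∧ ∀ t ∈ A, t ∈ Ico 0 (2 * π) ∧ u t = 0 := by
  by_cases h0 : ∀ t, u t = 0
  · refine ⟨{0, 1, 2, 3}, by norm_num, fun t ht => ⟨?_, h0 t⟩⟩
    simp only [Finset.mem_insert, Finset.mem_singleton] at ht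
    rcases ht with rfl | rfl | rfl | rfl <;> constructor <;> linarith [pi_gt_three]
  push Not at h0
  obtain ⟨x, hx⟩ := h0
  wlog hxpos : 0 < u x generalizing u
  · obtain ⟨A, hA, hAmem⟩ := this hu.neg (neg_ne_zero.2 hx)
      (neg_pos.2 (lt_of_le_of_ne (not_lt.1 hxpos) hx))
    exact ⟨A, hA, fun t ht => ⟨(hAmem t ht).1, neg_eq_zero.1 (hAmem t ht).2⟩⟩
  obtain ⟨y, hy⟩ := hu.exists_neg_of_pos hxpos
  obtain ⟨p, q, hpx, hxq, hqp, hp0, hq0, hpos⟩ :=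
    hu.periodic.exists_zero_arc two_pi_pos hu.continuous hxpos hy
  obtain ⟨w₁, ⟨hqw₁, hw₁P⟩, -, hw₁0⟩ := hu.exists_zero_ne_of_pos_on (hpx.trans hxq) hp0 hpos
    (w := (q + (p + 2 * π)) / 2) ⟨by linarith, by linarith⟩
  obtain ⟨w₂, ⟨hqw₂, hw₂P⟩, hw₂₁, hw₂0⟩ :=
    hu.exists_zero_ne_of_pos_on (hpx.trans hxq) hp0 hpos ⟨hqw₁, hw₁P⟩
  obtain ⟨A, hA, hAmem⟩ := hu.periodic.exists_finset_zeros_Ico two_pi_pos p 0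
    (B := {p, q, w₁, w₂}) (by
      simp only [Finset.mem_insert, Finset.mem_singleton]
      rintro t (rfl | rfl | rfl | rfl) <;> refine ⟨⟨?_, ?_⟩, ?_⟩ <;> first | assumption | linarith)
  refine ⟨A, ?_, by simpa using hAmem⟩
  rw [hA, Finset.card_insert_of_notMem, Finset.card_insert_of_notMem, Finset.card_pair hw₂₁.symm]
  all_goals simp only [Finset.mem_insert, Finset.mem_singleton, not_or]
  exacts [⟨hqw₁.ne, hqw₂.ne⟩, ⟨(hpx.trans hxq).ne, (hpx.trans (hxq.trans hqw₁)).ne,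
    (hpx.trans (hxq.trans hqw₂)).ne⟩]

end LowHarmonicsVanish

theorem lowHarmonicsVanish_deriv {g : ℝ → ℝ} (hg : ContDiff ℝ 1 g) (hper : Periodic g (2 * π))
    (hcos : ∫ t in (0 : ℝ)..2 * π, g t * cos t = 0)
    (hsin : ∫ t in (0 : ℝ)..2 * π, g t * sin t = 0) :
    LowHarmonicsVanish (deriv g) := by
  have hd : Differentiable ℝ g := hg.differentiable one_ne_zero
  have hcont : Continuous (deriv g) := hg.continuous_deriv le_rfl
  have hg2π : g (2 * π) = g 0 := by simpa using hper 0
  refine ⟨hcont, fun t => ?_, ?_, ?_, ?_⟩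
  · rw [← deriv_comp_add_const]
    exact congrArg (deriv · t) (funext hper)
  · rw [intervalIntegral.integral_deriv_eq_sub (fun t _ => hd t) (hcont.intervalIntegrable _ _),
      hg2π, sub_self]
  · have h := intervalIntegral.integral_mul_deriv_eq_deriv_mul (a := 0) (b := 2 * π)
      (fun t _ => hasDerivAt_cos t) (fun t _ => (hd t).hasDerivAt)
      (continuous_sin.neg.intervalIntegrable _ _) (hcont.intervalIntegrable _ _)
    simp only [cos_two_pi, cos_zero, hg2π, neg_mul, intervalIntegral.integral_neg,
      mul_comm (cos _), mul_comm (sin _), hsin] at h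
    linarith
  · have h := intervalIntegral.integral_mul_deriv_eq_deriv_mul (a := 0) (b := 2 * π)
      (fun t _ => hasDerivAt_sin t) (fun t _ => (hd t).hasDerivAt)
      (continuous_cos.intervalIntegrable _ _) (hcont.intervalIntegrable _ _)
    simp only [sin_two_pi, sin_zero, mul_comm (sin _), mul_comm (cos _), hcos] at h
    linarith

theorem four_equilibria
    (r : ℝ → ℝ) (hpos : ∀ φ, 0 < r φ)
    (hper : Function.Periodic r (2 * π)) (hr : ContDiff ℝ 1 r)
    (hc1 : (∫ φ in (0:ℝ)..(2 * π), r φ ^ 3 * Real.cos φ) = 0)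
    (hc2 : (∫ φ in (0:ℝ)..(2 * π), r φ ^ 3 * Real.sin φ) = 0) :
    ∃ A : Finset ℝ, 4 ≤ A.card ∧ ∀ φ ∈ A, φ ∈ Set.Ico (0:ℝ) (2 * π) ∧ deriv r φ = 0 := by
  obtain ⟨A, hA, hAmem⟩ := (lowHarmonicsVanish_deriv (hr.pow 3)
    (fun φ => by simp only [hper φ]) hc1 hc2).exists_four_zeros
  refine ⟨A, hA, fun φ hφ => ⟨(hAmem φ hφ).1, ?_⟩⟩
  have hderiv : deriv (fun φ => r φ ^ 3) φ = 3 * r φ ^ 2 * deriv r φ := by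
    have h := (((hr.differentiable one_ne_zero) φ).hasDerivAt.pow 3).deriv
    norm_num at h
    exact h
  have h0 := (hAmem φ hφ).2
  rw [hderiv] at h0
  simpa [(hpos φ).ne'] using h0
end

section
/- Let p : ℝ → ℝ be 2π-periodic and C³ such that p' has only finitely many zeros, all simple. Then the number n of zeros of p' in [0, 2π) satisfies n = (1/π)∫₀^{2π} (p''(φ)² - p'(φ)p'''(φ))/(p'(φ)² + p''(φ)²) dφ. -/
/-!
The integrand is the derivative of `-arctan (p'' / p')` wherever `p' ≠ 0`. Near a simple zero `a`
of `p'` one has `p'' / p' ~ 1 / (x - a)`, so between two consecutive zeros `-arctan (p'' / p')` climbs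
from `-π/2` to `π/2` and the integral over the gap is `π`. Starting the period window at a zero,
the integral over a period is therefore `π` times the number of zeros; if `p'` has no zero,
`-arctan (p'' / p')` is a periodic primitive and the integral vanishes.
-/

open Real Filter Set Topology MeasureTheory

section Periodic

variable {α β : Type*} [AddCommGroup α] [LinearOrder α] [IsOrderedAddMonoid α] [Archimedean α]
  {f : α → β} {T : α}

theorem Function.Periodic.bijOn_toIcoMod (hf : Function.Periodic f T) (hT : 0 < T)
    (a b : α) (c : β) :
    BijOn (toIcoMod hT b) {x ∈ Ico a (a + T) | f x = c} {x ∈ Ico b (b + T) | f x = c} := by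
  have hmod (b x : α) : f (toIcoMod hT b x) = f x := hf.sub_zsmul_eq (toIcoDiv hT b x)
  refine ⟨fun x hx => ⟨toIcoMod_mem_Ico hT b x, (hmod b x).trans hx.2⟩, ?_, ?_⟩
  · intro x hx y hy hxy
    rw [← (toIcoMod_eq_self hT).2 hx.1, ← (toIcoMod_eq_self hT).2 hy.1]
    exact (toIcoMod_inj hT).2 ((toIcoMod_inj hT).1 hxy)
  · intro y hy
    refine ⟨toIcoMod hT a y, ⟨toIcoMod_mem_Ico hT a y, (hmod a y).trans hy.2⟩, ?_⟩
    rw [toIcoMod_toIcoMod, (toIcoMod_eq_self hT).2 hy.1]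

end Periodic

theorem Function.Periodic.deriv {𝕜 F : Type*} [NontriviallyNormedField 𝕜] [NormedAddCommGroup F]
    [NormedSpace 𝕜 F] {f : 𝕜 → F} {T : 𝕜} (hf : Function.Periodic f T) :
    Function.Periodic (deriv f) T := fun x => by
  rw [← deriv_comp_add_const, hf.funext]

theorem tendsto_inv_sub_nhdsGT (a : ℝ) : Tendsto (fun x => (x - a)⁻¹) (𝓝[>] a) atTop := by
  have := (map_subRight_nhdsGT (c := a) (a := a)).le
  rw [sub_self] at this
  exact tendsto_inv_nhdsGT_zero.comp this

theorem tendsto_inv_sub_nhdsLT (a : ℝ) : Tendsto (fun x => (x - a)⁻¹) (𝓝[<] a) atBot := by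
  have := (map_subRight_nhdsLT (c := a) (a := a)).le
  rw [sub_self] at this
  exact tendsto_inv_nhdsLT_zero.comp this

/-- The derivative of the argument of the plane curve `x ↦ (f' x, f x)`. -/
noncomputable def windingIntegrand (f f' f'' : ℝ → ℝ) (x : ℝ) : ℝ :=
  (f' x ^ 2 - f x * f'' x) / (f x ^ 2 + f' x ^ 2)

section Winding

variable {f f' f'' : ℝ → ℝ} {a b x : ℝ}

theorem sq_add_sq_pos_of_simple_zeros (hsimple : ∀ x, f x = 0 → f' x ≠ 0) (x : ℝ) :
    0 < f x ^ 2 + f' x ^ 2 := by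
  by_cases hx : f x = 0
  · have := hsimple x hx
    positivity
  · positivity

theorem continuous_windingIntegrand (hf : Continuous f) (hf' : Continuous f')
    (hf'' : Continuous f'') (hsimple : ∀ x, f x = 0 → f' x ≠ 0) :
    Continuous (windingIntegrand f f' f'') :=
  ((hf'.pow 2).sub (hf.mul hf'')).div ((hf.pow 2).add (hf'.pow 2))
    fun x => (sq_add_sq_pos_of_simple_zeros hsimple x).ne'

theorem hasDerivAt_neg_arctan_div (hf : HasDerivAt f (f' x) x) (hf' : HasDerivAt f' (f'' x) x)
    (hx : f x ≠ 0) :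
    HasDerivAt (fun y => -arctan (f' y / f y)) (windingIntegrand f f' f'' x) x := by
  refine ((hasDerivAt_arctan _).comp x (hf'.div hf hx)).neg.congr_deriv ?_
  have : f x ^ 2 + f' x ^ 2 ≠ 0 := by positivity
  simp only [windingIntegrand, Pi.div_apply]
  field_simp
  ring

theorem tendsto_sub_mul_div_of_simple_zero (hf : HasDerivAt f (f' a) a) (hf' : ContinuousAt f' a)
    (ha : f a = 0) (ha' : f' a ≠ 0) :
    Tendsto (fun x => (x - a) * (f' x / f x)) (𝓝[≠] a) (𝓝 1) := by
  have hslope := hasDerivAt_iff_tendsto_slope.1 hf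
  have := (hf'.tendsto.mono_left nhdsWithin_le_nhds).div hslope ha'
  rw [div_self ha'] at this
  refine this.congr' ?_
  filter_upwards [self_mem_nhdsWithin] with x hx
  rw [Pi.div_apply, slope_def_field, ha, sub_zero]
  have : x - a ≠ 0 := sub_ne_zero.2 hx
  field_simp

theorem tendsto_div_atTop_of_simple_zero (hf : HasDerivAt f (f' a) a) (hf' : ContinuousAt f' a)
    (ha : f a = 0) (ha' : f' a ≠ 0) :
    Tendsto (fun x => f' x / f x) (𝓝[>] a) atTop := by
  have h := (tendsto_sub_mul_div_of_simple_zero hf hf' ha ha').mono_left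
    (nhdsWithin_mono a fun x (hx : a < x) => hx.ne')
  refine (h.pos_mul_atTop one_pos (tendsto_inv_sub_nhdsGT a)).congr' ?_
  filter_upwards [self_mem_nhdsWithin] with x (hx : a < x)
  have : x - a ≠ 0 := sub_ne_zero.2 hx.ne'
  field_simp

theorem tendsto_div_atBot_of_simple_zero (hf : HasDerivAt f (f' a) a) (hf' : ContinuousAt f' a)
    (ha : f a = 0) (ha' : f' a ≠ 0) :
    Tendsto (fun x => f' x / f x) (𝓝[<] a) atBot := by
  have h := (tendsto_sub_mul_div_of_simple_zero hf hf' ha ha').mono_left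
    (nhdsWithin_mono a fun x (hx : x < a) => hx.ne)
  refine (h.pos_mul_atBot one_pos (tendsto_inv_sub_nhdsLT a)).congr' ?_
  filter_upwards [self_mem_nhdsWithin] with x (hx : x < a)
  have : x - a ≠ 0 := sub_ne_zero.2 hx.ne
  field_simp

theorem Function.Periodic.windingIntegrand {T : ℝ} (h : Function.Periodic f T)
    (h' : Function.Periodic f' T) (h'' : Function.Periodic f'' T) :
    Function.Periodic (windingIntegrand f f' f'') T := fun x => by
  simp only [_root_.windingIntegrand, h x, h' x, h'' x]

theorem integral_windingIntegrand_eq_zero_of_periodic {T : ℝ}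
    (hd : ∀ x, HasDerivAt f (f' x) x) (hd' : ∀ x, HasDerivAt f' (f'' x) x)
    (hT : Function.Periodic f T) (hT' : Function.Periodic f' T) (hf : ∀ x, f x ≠ 0)
    (hint : IntervalIntegrable (windingIntegrand f f' f'') volume a (a + T)) :
    ∫ x in a..a + T, windingIntegrand f f' f'' x = 0 := by
  rw [intervalIntegral.integral_eq_sub_of_hasDerivAt
    (fun x _ => hasDerivAt_neg_arctan_div (hd x) (hd' x) (hf x)) hint, hT a, hT' a, sub_self]

theorem integral_windingIntegrand_of_consecutive_zeros
    (hd : ∀ x, HasDerivAt f (f' x) x) (hd' : ∀ x, HasDerivAt f' (f'' x) x)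
    (hab : a < b) (ha : f a = 0) (hb : f b = 0) (ha' : f' a ≠ 0) (hb' : f' b ≠ 0)
    (hgap : ∀ x ∈ Ioo a b, f x ≠ 0)
    (hint : IntervalIntegrable (windingIntegrand f f' f'') volume a b) :
    ∫ x in a..b, windingIntegrand f f' f'' x = π := by
  have hright := (tendsto_arctan_atTop.mono_right nhdsWithin_le_nhds).comp
    (tendsto_div_atTop_of_simple_zero (hd a) (hd' a).continuousAt ha ha')
  have hleft := (tendsto_arctan_atBot.mono_right nhdsWithin_le_nhds).comp
    (tendsto_div_atBot_of_simple_zero (hd b) (hd' b).continuousAt hb hb')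
  rw [intervalIntegral.integral_eq_sub_of_hasDerivAt_of_tendsto hab
    (fun x hx => hasDerivAt_neg_arctan_div (hd x) (hd' x) (hgap x hx)) hint hright.neg hleft.neg]
  ring

theorem integral_windingIntegrand_eq_ncard_mul_pi
    (hd : ∀ x, HasDerivAt f (f' x) x) (hd' : ∀ x, HasDerivAt f' (f'' x) x)
    (hsimple : ∀ x, f x = 0 → f' x ≠ 0) (hcont : Continuous (windingIntegrand f f' f''))
    (hab : a ≤ b) (ha : f a = 0) (hb : f b = 0) (hfin : {x ∈ Ico a b | f x = 0}.Finite) :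
    ∫ x in a..b, windingIntegrand f f' f'' x = {x ∈ Ico a b | f x = 0}.ncard * π := by
  induction hn : {x ∈ Ico a b | f x = 0}.ncard generalizing a with
  | zero =>
    obtain rfl : a = b := by
      refine hab.eq_of_not_lt fun hlt => ?_
      have hmem : a ∈ {x ∈ Ico a b | f x = 0} := ⟨⟨le_rfl, hlt⟩, ha⟩
      rw [(Set.ncard_eq_zero hfin).1 hn] at hmem
      exact hmem
    simp
  | succ n ih =>
    have hlt : a < b := by
      refine hab.lt_of_ne fun heq => ?_
      simp [heq] at hn
    have hfin' : {x ∈ Ioc a b | f x = 0}.Finite :=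
      (hfin.insert b).subset fun x ⟨⟨hax, hxb⟩, hx⟩ =>
        hxb.eq_or_lt.imp id fun h => ⟨⟨hax.le, h⟩, hx⟩
    obtain ⟨c, ⟨⟨hac, hcb⟩, hc⟩, hmin⟩ :=
      Set.exists_min_image _ id hfin' ⟨b, ⟨hlt, le_rfl⟩, hb⟩
    have hgap : ∀ x ∈ Ioo a c, f x ≠ 0 := fun x hx hx0 =>
      (hx.2.trans_le (hmin x ⟨⟨hx.1, hx.2.le.trans hcb⟩, hx0⟩)).false
    have hzeros : {x ∈ Ico c b | f x = 0} = {x ∈ Ico a b | f x = 0} \ {a} := by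
      ext x
      simp only [Set.mem_sdiff, mem_ofPred_eq, mem_Ico, mem_singleton_iff]
      constructor
      · rintro ⟨⟨hcx, hxb⟩, hx⟩
        exact ⟨⟨⟨hac.le.trans hcx, hxb⟩, hx⟩, (hac.trans_le hcx).ne'⟩
      · rintro ⟨⟨⟨hax, hxb⟩, hx⟩, hxa⟩
        exact ⟨⟨hmin x ⟨⟨lt_of_le_of_ne hax (Ne.symm hxa), hxb.le⟩, hx⟩, hxb⟩, hx⟩
    have hncard : {x ∈ Ico c b | f x = 0}.ncard = n := by
      have hmem : a ∈ {x ∈ Ico a b | f x = 0} := ⟨⟨le_rfl, hlt⟩, ha⟩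
      rw [hzeros, ncard_sdiff_singleton_of_mem hmem, hn, Nat.add_sub_cancel]
    rw [← intervalIntegral.integral_add_adjacent_intervals (hcont.intervalIntegrable a c)
        (hcont.intervalIntegrable c b),
      integral_windingIntegrand_of_consecutive_zeros hd hd' hac ha hc (hsimple a ha)
        (hsimple c hc) hgap (hcont.intervalIntegrable a c),
      ih hcb hc (hzeros ▸ hfin.sdiff) hncard]
    push_cast
    ring

end Winding

theorem zero_counting_integral
    (p : ℝ → ℝ) (hper : Function.Periodic p (2 * π)) (hp : ContDiff ℝ 3 p)
    (hfin : {φ ∈ Set.Ico (0:ℝ) (2 * π) | deriv p φ = 0}.Finite)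
    (hsimple : ∀ φ, deriv p φ = 0 → deriv (deriv p) φ ≠ 0) :
    ({φ ∈ Set.Ico (0:ℝ) (2 * π) | deriv p φ = 0}.ncard : ℝ)
      = (1 / π) * ∫ φ in (0:ℝ)..(2 * π),
          ((deriv (deriv p) φ) ^ 2 - deriv p φ * deriv (deriv (deriv p)) φ)
            / ((deriv p φ) ^ 2 + (deriv (deriv p) φ) ^ 2) := by
  have hp2 : ContDiff ℝ 2 (deriv p) := hp.deriv'
  have hp1 : ContDiff ℝ 1 (deriv (deriv p)) := hp2.deriv'
  have hd (x : ℝ) : HasDerivAt (deriv p) (deriv (deriv p) x) x :=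
    (hp2.differentiable two_ne_zero x).hasDerivAt
  have hd' (x : ℝ) : HasDerivAt (deriv (deriv p)) (deriv (deriv (deriv p)) x) x :=
    (hp1.differentiable one_ne_zero x).hasDerivAt
  have hcont := continuous_windingIntegrand hp2.continuous hp1.continuous
    hp1.continuous_deriv_one hsimple
  have hper₁ := hper.deriv
  have hperG := hper₁.windingIntegrand hper₁.deriv hper₁.deriv.deriv
  change _ = 1 / π * ∫ φ in (0:ℝ)..(2 * π), windingIntegrand _ _ _ φ
  by_cases hzero : ∃ z ∈ Ico 0 (2 * π), deriv p z = 0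
  · obtain ⟨z, -, hz⟩ := hzero
    have hbij := hper₁.bijOn_toIcoMod two_pi_pos 0 z 0
    rw [zero_add] at hbij
    have hshift := hperG.intervalIntegral_add_eq 0 z
    rw [zero_add] at hshift
    rw [hbij.ncard_eq, hshift,
      integral_windingIntegrand_eq_ncard_mul_pi hd hd' hsimple hcont (by linarith [two_pi_pos])
        hz (by rw [hper₁ z, hz]) (hbij.image_eq ▸ hfin.image _)]
    field_simp
  · push Not at hzero
    have hne (x : ℝ) : deriv p x ≠ 0 := by
      obtain ⟨y, hy, hxy⟩ := hper₁.exists_mem_Ico₀ two_pi_pos x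
      exact hxy ▸ hzero y hy
    have hint := integral_windingIntegrand_eq_zero_of_periodic (a := 0) hd hd' hper₁
      hper₁.deriv hne (hcont.intervalIntegrable _ _)
    rw [zero_add] at hint
    simp [hne, hint]
end

section
/- Let p be C^k on a neighborhood of 0, k ≥ 3, and suppose p'(0) = p''(0) = ... = p^{(k-1)}(0) = 0 but p^{(k)}(0) ≠ 0 (p' has a zero of order k-1 at 0). Then lim_{φ→0} (p''(φ)² - p'(φ)p'''(φ))/(p'(φ)² + p''(φ)²) = 1/(k-1). -/
/-!
Put `f = p'`, which vanishes to order `m = k - 1` at `0` with `c = f⁽ᵐ⁾(0) ≠ 0`. By L'Hôpital's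
rule, `f⁽ʲ⁾(x) / x ^ (m - j) → c / (m - j)!` for `j ≤ m`. Dividing numerator and denominator of
the integrand by `x ^ (2m - 2)`, the term `f²` of the denominator disappears in the limit, and the
ratio tends to `(1 / (m-1)!² - 1 / (m! (m-2)!)) / (1 / (m-1)!²) = 1 - (m - 1) / m = 1 / m`.
-/

open Filter Topology

theorem ContDiffAt.iteratedDeriv {𝕜 F : Type*} [NontriviallyNormedField 𝕜] [NormedAddCommGroup F]
    [NormedSpace 𝕜 F] {f : 𝕜 → F} {a : 𝕜} {r : ℕ} :
    ∀ {j : ℕ}, ContDiffAt 𝕜 (j + r : ℕ) f a → ContDiffAt 𝕜 r (iteratedDeriv j f) a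
  | 0, hf => by simpa using hf
  | j + 1, hf => by
    rw [iteratedDeriv_succ']
    exact ContDiffAt.iteratedDeriv (hf.derivWithin (by push_cast; rw [add_right_comm]))

theorem iteratedDeriv_iteratedDeriv {𝕜 F : Type*} [NontriviallyNormedField 𝕜]
    [NormedAddCommGroup F] [NormedSpace 𝕜 F] (i j : ℕ) (f : 𝕜 → F) :
    iteratedDeriv i (iteratedDeriv j f) = iteratedDeriv (i + j) f := by
  simp only [iteratedDeriv_eq_iterate, Function.iterate_add_apply]

section

open Nat

theorem tendsto_div_pow_of_iteratedDeriv_eq_zero {a : ℝ} :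
    ∀ {n : ℕ} {f : ℝ → ℝ}, ContDiffAt ℝ n f a → (∀ i < n, iteratedDeriv i f a = 0) →
      Tendsto (fun x => f x / (x - a) ^ n) (𝓝[≠] a) (𝓝 (iteratedDeriv n f a / n !))
  | 0, f, hf, _ => by
    simpa using hf.continuousAt.tendsto.mono_left nhdsWithin_le_nhds
  | n + 1, f, hf, hz => by
    have hderiv : Tendsto (fun x => deriv f x / (x - a) ^ n) (𝓝[≠] a)
        (𝓝 (iteratedDeriv (n + 1) f a / n !)) := by
      rw [iteratedDeriv_succ']
      refine tendsto_div_pow_of_iteratedDeriv_eq_zero (hf.derivWithin (by push_cast; rfl))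
        fun i hi => ?_
      rw [← iteratedDeriv_succ']
      exact hz _ (by omega)
    have hfa : Tendsto f (𝓝[≠] a) (𝓝 0) := by
      have := hf.continuousAt.tendsto.mono_left (nhdsWithin_le_nhds (s := {a}ᶜ))
      rwa [← iteratedDeriv_zero (f := f), hz 0 n.succ_pos] at this
    have hga : Tendsto (fun x => (x - a) ^ (n + 1)) (𝓝[≠] a) (𝓝 0) := by
      have : Continuous fun x : ℝ => (x - a) ^ (n + 1) := by fun_prop
      simpa using this.continuousAt.tendsto.mono_left (nhdsWithin_le_nhds (a := a))
    refine HasDerivAt.lhopital_zero_nhdsNE (f' := deriv f)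
      (g' := fun x => (n + 1 : ℕ) * (x - a) ^ n) ?_ ?_ ?_ hfa hga ?_
    · filter_upwards [nhdsWithin_le_nhds (hf.eventually (by simp))] with x hx
      exact (hx.differentiableAt (by simp)).hasDerivAt
    · exact Eventually.of_forall fun x => by
        simpa using ((hasDerivAt_id x).sub_const a).fun_pow (n + 1)
    · filter_upwards [self_mem_nhdsWithin] with x hx
      have : x - a ≠ 0 := sub_ne_zero.2 hx
      positivity
    · convert hderiv.div_const ((n + 1 : ℕ) : ℝ) using 2 with x
      · rw [div_div, mul_comm]
      · rw [factorial_succ, cast_mul, div_div, mul_comm]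

theorem tendsto_iteratedDeriv_div_pow_of_iteratedDeriv_eq_zero {f : ℝ → ℝ} {a : ℝ} {j r : ℕ}
    (hf : ContDiffAt ℝ (j + r : ℕ) f a) (hz : ∀ i < j + r, iteratedDeriv i f a = 0) :
    Tendsto (fun x => iteratedDeriv j f x / (x - a) ^ r) (𝓝[≠] a)
      (𝓝 (iteratedDeriv (j + r) f a / r !)) := by
  have := tendsto_div_pow_of_iteratedDeriv_eq_zero hf.iteratedDeriv fun i hi => by
    rw [iteratedDeriv_iteratedDeriv]
    exact hz _ (by omega)
  rwa [iteratedDeriv_iteratedDeriv, add_comm] at this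

theorem tendsto_sq_sub_mul_div_sq_add_sq {u v w : ℝ → ℝ} {a A B C : ℝ} {n : ℕ}
    (hu : Tendsto (fun x => u x / (x - a) ^ (n + 2)) (𝓝[≠] a) (𝓝 A))
    (hv : Tendsto (fun x => v x / (x - a) ^ (n + 1)) (𝓝[≠] a) (𝓝 B))
    (hw : Tendsto (fun x => w x / (x - a) ^ n) (𝓝[≠] a) (𝓝 C)) (hB : B ≠ 0) :
    Tendsto (fun x => (v x ^ 2 - u x * w x) / (u x ^ 2 + v x ^ 2)) (𝓝[≠] a)
      (𝓝 ((B ^ 2 - A * C) / B ^ 2)) := by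
  have hsub : Tendsto (fun x => x - a) (𝓝[≠] a) (𝓝 0) := by
    have : Continuous fun x : ℝ => x - a := by fun_prop
    simpa using this.continuousAt.tendsto.mono_left (nhdsWithin_le_nhds (a := a))
  have hnum := (hv.pow 2).sub (hu.mul hw)
  have hden := ((hsub.pow 2).mul (hu.pow 2)).add (hv.pow 2)
  rw [zero_pow two_ne_zero, zero_mul, zero_add] at hden
  refine (hnum.div hden (pow_ne_zero 2 hB)).congr' ?_
  filter_upwards [self_mem_nhdsWithin] with x hx
  have hxa : x - a ≠ 0 := sub_ne_zero.2 hx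
  calc _ = (v x ^ 2 - u x * w x) / (x - a) ^ (2 * n + 2)
        / ((u x ^ 2 + v x ^ 2) / (x - a) ^ (2 * n + 2)) := by
        rw [Pi.div_apply]
        congr 1 <;> field_simp <;> ring
    _ = _ := div_div_div_cancel_right₀ (pow_ne_zero _ hxa) _ _

theorem div_factorial_sq_sub_mul_div_sq {c : ℝ} (hc : c ≠ 0) (n : ℕ) :
    ((c / (n + 1)!) ^ 2 - c / (n + 2)! * (c / n !)) / (c / (n + 1)!) ^ 2 = 1 / (n + 2 : ℕ) := by
  simp only [factorial_succ, cast_mul]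
  field_simp
  push_cast
  ring

theorem tendsto_deriv_sq_sub_mul_div_sq_add_deriv_sq {f : ℝ → ℝ} {a : ℝ} {m : ℕ} (hm : 2 ≤ m)
    (hf : ContDiffAt ℝ m f a) (hz : ∀ i < m, iteratedDeriv i f a = 0)
    (hne : iteratedDeriv m f a ≠ 0) :
    Tendsto (fun x => (deriv f x ^ 2 - f x * deriv (deriv f) x) / (f x ^ 2 + deriv f x ^ 2))
      (𝓝[≠] a) (𝓝 (1 / m)) := by
  obtain ⟨n, rfl⟩ : ∃ n, m = n + 2 := ⟨m - 2, by omega⟩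
  have h0 := tendsto_iteratedDeriv_div_pow_of_iteratedDeriv_eq_zero (j := 0) (r := n + 2)
    (by simpa using hf) (by simpa using hz)
  have h1 := tendsto_iteratedDeriv_div_pow_of_iteratedDeriv_eq_zero (j := 1) (r := n + 1)
    (by rwa [add_comm]) (by rwa [add_comm])
  have h2 := tendsto_iteratedDeriv_div_pow_of_iteratedDeriv_eq_zero (j := 2) (r := n)
    (by rwa [add_comm]) (by rwa [add_comm])
  have hderiv2 : iteratedDeriv 2 f = deriv (deriv f) := by
    rw [iteratedDeriv_succ, iteratedDeriv_one]
  simp only [iteratedDeriv_zero, iteratedDeriv_one, hderiv2, zero_add,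
    show 1 + (n + 1) = n + 2 by omega, show 2 + n = n + 2 by omega] at h0 h1 h2
  have := tendsto_sq_sub_mul_div_sq_add_sq h0 h1 h2 (div_ne_zero hne (by positivity))
  rwa [div_factorial_sq_sub_mul_div_sq hne] at this

end

theorem limit_zero_counting_integrand
    (p : ℝ → ℝ) (k : ℕ) (hk : 3 ≤ k) (hp : ContDiffAt ℝ k p 0)
    (hzero : ∀ j, 1 ≤ j → j ≤ k - 1 → iteratedDeriv j p 0 = 0)
    (hne : iteratedDeriv k p 0 ≠ 0) :
    Filter.Tendsto
      (fun φ => ((deriv (deriv p) φ) ^ 2 - deriv p φ * deriv (deriv (deriv p)) φ)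
          / ((deriv p φ) ^ 2 + (deriv (deriv p) φ) ^ 2))
      (nhdsWithin 0 {(0:ℝ)}ᶜ) (nhds (1 / ((k : ℝ) - 1))) := by
  have hp' : ContDiffAt ℝ (k - 1 : ℕ) (deriv p) 0 := hp.derivWithin (by norm_cast; omega)
  have hz : ∀ i < k - 1, iteratedDeriv i (deriv p) 0 = 0 := fun i hi => by
    rw [← iteratedDeriv_succ']
    exact hzero _ (by omega) (by omega)
  have hne' : iteratedDeriv (k - 1) (deriv p) 0 ≠ 0 := by
    rwa [← iteratedDeriv_succ', Nat.sub_add_cancel (by omega)]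
  have := tendsto_deriv_sq_sub_mul_div_sq_add_deriv_sq (by omega) hp' hz hne'
  rwa [Nat.cast_sub (by omega), Nat.cast_one] at this
end

section
/- For the ellipse with semi-axes a > 1 and b = 1, with support function p(φ) = √(a²cos²φ + sin²φ), the equation p'(φ) = tan(α)·p(φ) has exactly four solutions in [0, 2π) whenever 0 ≤ tan(α) < (a²-1)/(2a), i.e., the ellipse has four oblique equilibria with respect to its center for every inclination angle α with tan α < (a²-1)/(2a). -/
/-!
Since `p² = a² cos² φ + sin² φ` and `(p²)' = 2 (1 - a²) sin φ cos φ`, the equation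
`p' = tan α · p` is the homogeneous quadratic equation
`tan α · sin² φ + (a² - 1) sin φ cos φ + tan α · a² cos² φ = 0` in `(cos φ, sin φ)`.
For `0 ≤ tan α < (a² - 1) / (2a)` its discriminant is positive, so it splits into two
non-proportional linear factors `A cos φ + B sin φ = ‖A + B i‖ cos (φ - arg (A + B i))`.
Each factor vanishes at exactly two antipodal angles, and the two pairs are disjoint.
-/

open Real Set

lemma ncard_setOf_Ico_two_pi_eq (P : Real.Angle → Prop) :
    {φ ∈ Ico 0 (2 * π) | P φ}.ncard = {θ : Real.Angle | P θ}.ncard := by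
  have : Fact (0 < 2 * π) := ⟨two_pi_pos⟩
  have hinj : InjOn ((↑) : ℝ → Real.Angle) (Ico 0 (2 * π)) := fun x hx y hy =>
    (AddCircle.coe_eq_coe_iff_of_mem_Ico (a := 0) (by simpa using hx) (by simpa using hy)).mp
  rw [← (hinj.mono fun _ h => h.1).ncard_image]
  congr 1
  ext θ
  refine ⟨?_, fun hθ => ?_⟩
  · rintro ⟨φ, ⟨-, hφ⟩, rfl⟩
    exact hφ
  · induction θ using Real.Angle.induction_on with | h x => ?_
    have hx := toIcoMod_mem_Ico two_pi_pos 0 x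
    refine ⟨toIcoMod two_pi_pos 0 x, ⟨by simpa using hx, ?_⟩, ?_⟩
    · rwa [Real.Angle.coe_toIcoMod]
    · rw [Real.Angle.coe_toIcoMod]

lemma re_mul_cos_add_im_mul_sin (z : ℂ) (x : ℝ) :
    z.re * cos x + z.im * sin x = ‖z‖ * cos (x - Complex.arg z) := by
  rcases eq_or_ne z 0 with rfl | hz
  · simp
  rw [cos_sub, Complex.cos_arg hz, Complex.sin_arg]
  field_simp

lemma setOf_re_mul_cos_add_im_mul_sin_eq_zero {z : ℂ} (hz : z ≠ 0) :
    {θ : Real.Angle | z.re * θ.cos + z.im * θ.sin = 0} =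
      {↑(z.arg + π / 2), ↑(z.arg - π / 2)} := by
  ext θ
  induction θ using Real.Angle.induction_on with | h x => ?_
  simp only [mem_ofPred_eq, Real.Angle.cos_coe, Real.Angle.sin_coe, re_mul_cos_add_im_mul_sin,
    mul_eq_zero, norm_eq_zero, hz, false_or, mem_insert_iff, mem_singleton_iff]
  rw [← Real.Angle.cos_coe, Real.Angle.cos_eq_zero_iff, Real.Angle.coe_sub, sub_eq_iff_eq_add,
    sub_eq_iff_eq_add, ← Real.Angle.coe_add, ← Real.Angle.coe_add, add_comm (π / 2),
    add_comm (-π / 2), neg_div, ← sub_eq_add_neg]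

lemma ncard_setOf_re_mul_cos_add_im_mul_sin_eq_zero {z : ℂ} (hz : z ≠ 0) :
    {θ : Real.Angle | z.re * θ.cos + z.im * θ.sin = 0}.ncard = 2 := by
  rw [setOf_re_mul_cos_add_im_mul_sin_eq_zero hz]
  refine ncard_pair ?_
  rw [Ne, ← sub_eq_zero, ← Real.Angle.coe_sub]
  ring_nf
  exact Real.Angle.pi_ne_zero

lemma disjoint_setOf_re_mul_cos_add_im_mul_sin_eq_zero {z w : ℂ}
    (hzw : z.re * w.im ≠ z.im * w.re) :
    Disjoint {θ : Real.Angle | z.re * θ.cos + z.im * θ.sin = 0}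
      {θ : Real.Angle | w.re * θ.cos + w.im * θ.sin = 0} := by
  refine disjoint_left.mpr fun θ (hz : _ = 0) (hw : _ = 0) => ?_
  have hdet : z.re * w.im - z.im * w.re ≠ 0 := sub_ne_zero.mpr hzw
  have hcos : θ.cos = 0 := (mul_eq_zero.mp (by linear_combination w.im * hz - z.im * hw :
    (z.re * w.im - z.im * w.re) * θ.cos = 0)).resolve_left hdet
  have hsin : θ.sin = 0 := (mul_eq_zero.mp (by linear_combination z.re * hw - w.re * hz :
    (z.re * w.im - z.im * w.re) * θ.sin = 0)).resolve_left hdet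
  simpa [hcos, hsin] using Real.Angle.cos_sq_add_sin_sq θ

lemma ncard_setOf_mul_re_mul_cos_add_im_mul_sin_eq_zero {z w : ℂ}
    (hzw : z.re * w.im ≠ z.im * w.re) :
    {θ : Real.Angle |
      (z.re * θ.cos + z.im * θ.sin) * (w.re * θ.cos + w.im * θ.sin) = 0}.ncard = 4 := by
  have hz : z ≠ 0 := by rintro rfl; simp at hzw
  have hw : w ≠ 0 := by rintro rfl; simp at hzw
  have hfin {u : ℂ} (hu : u ≠ 0) :
      {θ : Real.Angle | u.re * θ.cos + u.im * θ.sin = 0}.Finite :=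
    finite_of_ncard_ne_zero (by simp [ncard_setOf_re_mul_cos_add_im_mul_sin_eq_zero hu])
  simp_rw [mul_eq_zero (M₀ := ℝ), ofPred_or]
  rw [ncard_union_eq (disjoint_setOf_re_mul_cos_add_im_mul_sin_eq_zero hzw) (hfin hz) (hfin hw),
    ncard_setOf_re_mul_cos_add_im_mul_sin_eq_zero hz,
    ncard_setOf_re_mul_cos_add_im_mul_sin_eq_zero hw]

lemma sq_mul_cos_sq_add_sin_sq_pos {a : ℝ} (ha : a ≠ 0) (φ : ℝ) :
    0 < a ^ 2 * cos φ ^ 2 + sin φ ^ 2 := by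
  rcases eq_or_ne (cos φ) 0 with hc | hc
  · simp [hc, sin_sq]
  · positivity

lemma hasDerivAt_sqrt_sq_mul_cos_sq_add_sin_sq {a : ℝ} (ha : a ≠ 0) (φ : ℝ) :
    HasDerivAt (fun φ => √(a ^ 2 * cos φ ^ 2 + sin φ ^ 2))
      ((1 - a ^ 2) * sin φ * cos φ / √(a ^ 2 * cos φ ^ 2 + sin φ ^ 2)) φ := by
  have hq : HasDerivAt (fun φ => a ^ 2 * cos φ ^ 2 + sin φ ^ 2)
      (2 * ((1 - a ^ 2) * sin φ * cos φ)) φ := by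
    refine ((((hasDerivAt_cos φ).pow 2).const_mul (a ^ 2)).add
      ((hasDerivAt_sin φ).pow 2)).congr_deriv ?_
    push_cast
    ring
  convert (hq.sqrt (sq_mul_cos_sq_add_sin_sq_pos ha φ).ne') using 1
  field_simp

lemma deriv_sqrt_sq_mul_cos_sq_add_sin_sq_eq_mul_iff {a : ℝ} (ha : a ≠ 0) (t φ : ℝ) :
    deriv (fun φ => √(a ^ 2 * cos φ ^ 2 + sin φ ^ 2)) φ =
        t * √(a ^ 2 * cos φ ^ 2 + sin φ ^ 2) ↔
      (1 - a ^ 2) * sin φ * cos φ = t * (a ^ 2 * cos φ ^ 2 + sin φ ^ 2) := by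
  have hq := sq_mul_cos_sq_add_sin_sq_pos ha φ
  rw [(hasDerivAt_sqrt_sq_mul_cos_sq_add_sin_sq ha φ).deriv, div_eq_iff (by positivity),
    mul_assoc t, mul_self_sqrt hq.le]

/-- `D` is the square root of the discriminant of `t u² + (a² - 1) u + t a²`, the equation in
`u = tan φ`; each factor is `sin φ = u cos φ` for one of its roots, cleared of denominators. -/
lemma ellipse_equilibrium_iff {a t D : ℝ} (hD : D ^ 2 = (a ^ 2 - 1) ^ 2 - 4 * a ^ 2 * t ^ 2)
    (hkD : a ^ 2 - 1 + D ≠ 0) (s c : ℝ) :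
    (1 - a ^ 2) * s * c = t * (a ^ 2 * c ^ 2 + s ^ 2) ↔
      (2 * a ^ 2 * t * c + (a ^ 2 - 1 + D) * s) * ((a ^ 2 - 1 + D) * c + 2 * t * s) = 0 := by
  have hfactor : (2 * a ^ 2 * t * c + (a ^ 2 - 1 + D) * s) * ((a ^ 2 - 1 + D) * c + 2 * t * s) =
      2 * (a ^ 2 - 1 + D) * (t * (a ^ 2 * c ^ 2 + s ^ 2) - (1 - a ^ 2) * s * c) := by
    linear_combination s * c * hD
  rw [hfactor, mul_eq_zero, or_iff_right (mul_ne_zero two_ne_zero hkD), sub_eq_zero, eq_comm]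

theorem ellipse_four_oblique_equilibria
    (a : ℝ) (ha : 1 < a)
    (p : ℝ → ℝ)
    (hp : ∀ φ, p φ = Real.sqrt (a ^ 2 * Real.cos φ ^ 2 + Real.sin φ ^ 2))
    (α : ℝ) (h0 : 0 ≤ Real.tan α) (h1 : Real.tan α < (a ^ 2 - 1) / (2 * a)) :
    {φ ∈ Set.Ico (0:ℝ) (2 * π) | deriv p φ = Real.tan α * p φ}.ncard = 4 := by
  set t := tan α
  set k := a ^ 2 - 1
  have h2at : 2 * a * t < k := by rwa [lt_div_iff₀ (by positivity), mul_comm] at h1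
  have hdisc : 0 < k ^ 2 - 4 * a ^ 2 * t ^ 2 := by
    have : 0 ≤ 2 * a * t := by positivity
    nlinarith
  set D := √(k ^ 2 - 4 * a ^ 2 * t ^ 2)
  have hD : 0 < D := sqrt_pos.mpr hdisc
  have hk : 0 < k := by nlinarith
  have hD2 : D ^ 2 = k ^ 2 - 4 * a ^ 2 * t ^ 2 := sq_sqrt hdisc.le
  have hp' : p = fun φ => √(a ^ 2 * cos φ ^ 2 + sin φ ^ 2) := funext hp
  have hequiv (φ : ℝ) : deriv p φ = t * p φ ↔
      (2 * a ^ 2 * t * cos φ + (k + D) * sin φ) * ((k + D) * cos φ + 2 * t * sin φ) = 0 := by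
    rw [hp', deriv_sqrt_sq_mul_cos_sq_add_sin_sq_eq_mul_iff (by positivity),
      ellipse_equilibrium_iff hD2 (add_pos hk hD).ne']
  simp only [hequiv, ← Real.Angle.cos_coe, ← Real.Angle.sin_coe]
  refine (ncard_setOf_Ico_two_pi_eq _).trans
    (ncard_setOf_mul_re_mul_cos_add_im_mul_sin_eq_zero (z := ⟨2 * a ^ 2 * t, k + D⟩)
      (w := ⟨k + D, 2 * t⟩) (ne_of_lt ?_))
  -- `(k + D)² - (2 a t)² = 2 D (k + D) > 0`
  nlinarith
end
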